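/- Suppose f*y₁ = x₁^a x₂^b in k[[x₁,x₂]] with a,b > 0, and f*y₂ = Σ α_{ij} x₁^i x₂^j with both: some α_{i0} ≠ 0 with i > 0, and some α_{0j} ≠ 0 with j > 0. Set i_o = min{i : α_{i0} ≠ 0} > 0 and j_o = min{j : α_{0j} ≠ 0} > 0. Then the 2-form d(f*y₁) ∧ d(f*y₂) equals g · x₁^{a-1} x₂^{b-1} dx₁ ∧ dx₂ where g ∈ k[[x₁,x₂]] satisfies: g ≡ -b·i_o·α_{i_o 0}·x₁^{i_o} + a·j_o·α_{0 j_o}·x₂^{j_o} modulo the ideal (x₁^{i_o+1}, x₂^{j_o+1}, x₁x₂). In particular g is not a unit times a monomial x₁^m x₂^n, so the zero locus of g is not contained in {x₁x₂ = 0}. -/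

import Mathlib

open MvPowerSeries

/-- The formal partial derivative of a multivariate power series in two variables. -/
noncomputable def pd {k : Type*} [Field k] (s : Fin 2) (f : MvPowerSeries (Fin 2) k) :
    MvPowerSeries (Fin 2) k :=
  fun e => ((e s + 1 : ℕ) : k) * MvPowerSeries.coeff (e + Finsupp.single s 1) f

/-!
Since `∂₁(x₁^a x₂^b) = a x₁^(a-1) x₂^b` and `∂₂(x₁^a x₂^b) = b x₁^a x₂^(b-1)`, the Jacobian of
`(x₁^a x₂^b, f)` is `x₁^(a-1) x₂^(b-1) · g` with `g = a x₂ ∂₂f - b x₁ ∂₁f`, and the coefficient of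
`g` at `x₁^i x₂^j` is `(a j - b i) α_{ij}`. On the axes it therefore vanishes below `x₁^{i_o}` and
`x₂^{j_o}` and is nonzero there, which gives the congruence (a power series all of whose nonzero
coefficients sit at exponents of a monomial ideal lies in that ideal) and keeps `g` out of `(x₁)`
and `(x₂)`; finally `g(0) = 0`.
-/

open Finsupp

namespace MvPowerSeries

variable {σ R : Type*} [CommRing R]

theorem coeff_X_mul_pderiv (s : σ) (f : MvPowerSeries σ R) (e : σ →₀ ℕ) :
    coeff e (X s * pderiv R s f) = coeff e f * e s := by
  rw [X_def, coeff_monomial_mul]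
  split_ifs with h
  · have hs : 1 ≤ e s := single_le_iff.mp h
    rw [one_mul, coeff_pderiv, tsub_add_cancel_of_le h, tsub_apply, single_eq_same,
      ← Nat.cast_add_one, Nat.sub_add_cancel hs]
  · have hs : e s = 0 := by simpa using mt single_le_iff.mpr h
    rw [hs, Nat.cast_zero, mul_zero]

theorem mem_span_monomial_of_coeff_eq_zero (N : Finset (σ →₀ ℕ)) (φ : MvPowerSeries σ R)
    (h : ∀ e, (∀ n ∈ N, ¬ n ≤ e) → coeff e φ = 0) :
    φ ∈ Ideal.span ((monomial · (1 : R)) '' N) := by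
  classical
  induction N using Finset.induction_on generalizing φ with
  | empty =>
    obtain rfl : φ = 0 := ext fun e => h e (by simp)
    exact zero_mem _
  | insert n N _ ih =>
    let q : MvPowerSeries σ R := fun e => coeff (e + n) φ
    have hq : ∀ e, coeff e (monomial n 1 * q) = if n ≤ e then coeff e φ else 0 := fun e => by
      rw [coeff_monomial_mul]
      split_ifs with hne
      · rw [one_mul]
        exact congrArg (coeff · φ) (tsub_add_cancel_of_le hne)
      · rfl
    rw [Finset.coe_insert, Set.image_insert_eq, Ideal.mem_span_insert]
    refine ⟨q, φ - monomial n 1 * q, ih _ fun e he => ?_, by ring⟩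
    rw [map_sub, hq]
    split_ifs with hne
    · exact sub_self _
    · rw [sub_zero]
      exact h e (by simpa [hne] using he)

end MvPowerSeries

lemma eq_single_zero_of_apply_one_eq_zero {e : Fin 2 →₀ ℕ} (h : e 1 = 0) :
    e = single 0 (e 0) := by
  ext i; fin_cases i <;> simp [h]

lemma eq_single_one_of_apply_zero_eq_zero {e : Fin 2 →₀ ℕ} (h : e 0 = 0) :
    e = single 1 (e 1) := by
  ext i; fin_cases i <;> simp [h]

theorem sub_mem_span_of_coeff_axes_eq {R : Type*} [CommRing R] (φ ψ : MvPowerSeries (Fin 2) R)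
    (p q : ℕ) (h₀ : ∀ m ≤ p, coeff (single 0 m) φ = coeff (single 0 m) ψ)
    (h₁ : ∀ n ≤ q, coeff (single 1 n) φ = coeff (single 1 n) ψ) :
    φ - ψ ∈ Ideal.span {(X 0 : MvPowerSeries (Fin 2) R) ^ (p + 1), X 1 ^ (q + 1), X 0 * X 1} := by
  have hgens : ({X 0 ^ (p + 1), X 1 ^ (q + 1), X 0 * X 1} : Set (MvPowerSeries (Fin 2) R)) =
      (monomial · 1) '' ↑({single 0 (p + 1), single 1 (q + 1), single 0 1 + single 1 1} :
        Finset (Fin 2 →₀ ℕ)) := by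
    rw [X_pow_eq, X_pow_eq, X_def 0, X_def 1, monomial_mul_monomial, one_mul]
    simp [Set.image_insert_eq]
  rw [hgens]
  refine mem_span_monomial_of_coeff_eq_zero _ _ fun e he => ?_
  simp only [Finset.mem_insert, Finset.mem_singleton, forall_eq_or_imp, forall_eq,
    single_le_iff, not_le] at he
  obtain ⟨hp, hq, hxy⟩ := he
  have hcorner : e 0 = 0 ∨ e 1 = 0 := by
    by_contra! hne
    refine hxy fun i => ?_
    fin_cases i <;> simp <;> omega
  rw [map_sub, sub_eq_zero]
  rcases hcorner with h | h
  · rw [eq_single_one_of_apply_zero_eq_zero h]; exact h₁ _ (by omega)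
  · rw [eq_single_zero_of_apply_one_eq_zero h]; exact h₀ _ (by omega)

section TwoVariables

variable {k : Type*} [Field k]

theorem pd_eq_pderiv (s : Fin 2) (f : MvPowerSeries (Fin 2) k) : pd s f = pderiv k s f := by
  ext e
  rw [coeff_pderiv, mul_comm, ← Nat.cast_add_one]
  rfl

noncomputable def jacobianCofactor (a b : ℕ) (f : MvPowerSeries (Fin 2) k) :
    MvPowerSeries (Fin 2) k :=
  (a : MvPowerSeries (Fin 2) k) * X 1 * pderiv k 1 f -
    (b : MvPowerSeries (Fin 2) k) * X 0 * pderiv k 0 f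

theorem jacobian_X_pow_mul_X_pow {a b : ℕ} (ha : 0 < a) (hb : 0 < b)
    (f : MvPowerSeries (Fin 2) k) :
    pd 0 ((X 0 : MvPowerSeries (Fin 2) k) ^ a * X 1 ^ b) * pd 1 f -
        pd 1 ((X 0 : MvPowerSeries (Fin 2) k) ^ a * X 1 ^ b) * pd 0 f =
      jacobianCofactor a b f * X 0 ^ (a - 1) * X 1 ^ (b - 1) := by
  obtain ⟨a, rfl⟩ := Nat.exists_eq_add_of_lt ha
  obtain ⟨b, rfl⟩ := Nat.exists_eq_add_of_lt hb
  simp only [pd_eq_pderiv, jacobianCofactor, Derivation.leibniz, Derivation.leibniz_pow,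
    pderiv_X_self, pderiv_X_of_ne zero_ne_one, pderiv_X_of_ne one_ne_zero, smul_eq_mul,
    nsmul_eq_mul, add_tsub_cancel_right]
  push_cast
  ring

theorem coeff_jacobianCofactor (a b : ℕ) (f : MvPowerSeries (Fin 2) k) (e : Fin 2 →₀ ℕ) :
    coeff e (jacobianCofactor a b f) = (a * e 1 - b * e 0) * coeff e f := by
  simp only [jacobianCofactor, map_sub, mul_assoc, ← map_natCast C, coeff_C_mul,
    coeff_X_mul_pderiv]
  ring

end TwoVariables

/-- Computation of 3.3.4 (Subcase `2_p1_q0` is impossible): with `f₁ = x₁^a x₂^b`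
(`a,b > 0`) and `f₂ = Σ α_{ij}x₁^i x₂^j` having `α_{i_o 0} ≠ 0`, `α_{0 j_o} ≠ 0` minimal,
the wedge `d f₁ ∧ d f₂ = g · x₁^{a-1} x₂^{b-1} dx₁ ∧ dx₂` where
`g ≡ -b i_o α_{i_o 0} x₁^{i_o} + a j_o α_{0 j_o} x₂^{j_o}` mod `(x₁^{i_o+1}, x₂^{j_o+1}, x₁x₂)`,
and `g` is not a unit times a monomial: `g ∉ (x₁)`, `g ∉ (x₂)`, `g` is not a unit. -/
theorem subcase_2p1q0_impossible {k : Type*} [Field k] [CharZero k]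
    (a b : ℕ) (ha : 0 < a) (hb : 0 < b)
    (f₂ : MvPowerSeries (Fin 2) k) (α : ℕ → ℕ → k)
    (hα : ∀ i j, α i j =
      coeff (Finsupp.single (0 : Fin 2) i + Finsupp.single (1 : Fin 2) j) f₂)
    (io jo : ℕ) (hio : 0 < io) (hjo : 0 < jo)
    (hαio : α io 0 ≠ 0) (hiomin : ∀ i < io, α i 0 = 0)
    (hαjo : α 0 jo ≠ 0) (hjomin : ∀ j < jo, α 0 j = 0) :
    ∃ g : MvPowerSeries (Fin 2) k,
      pd 0 ((X 0 : MvPowerSeries (Fin 2) k) ^ a * X 1 ^ b) * pd 1 f₂ -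
          pd 1 ((X 0 : MvPowerSeries (Fin 2) k) ^ a * X 1 ^ b) * pd 0 f₂ =
        g * X 0 ^ (a - 1) * X 1 ^ (b - 1) ∧
      g - (C (-((b : k) * (io : k) * α io 0)) * X 0 ^ io +
            C ((a : k) * (jo : k) * α 0 jo) * X 1 ^ jo) ∈
          Ideal.span {(X 0 : MvPowerSeries (Fin 2) k) ^ (io + 1), X 1 ^ (jo + 1),
            X 0 * X 1} ∧
      g ∉ Ideal.span {(X 0 : MvPowerSeries (Fin 2) k)} ∧
      g ∉ Ideal.span {(X 1 : MvPowerSeries (Fin 2) k)} ∧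
      ¬ IsUnit g := by
  have hα₀ : ∀ i, α i 0 = coeff (single 0 i) f₂ := by simpa using fun i => hα i 0
  have hα₁ : ∀ j, α 0 j = coeff (single 1 j) f₂ := by simpa using fun j => hα 0 j
  simp only [hα₀, hα₁] at hαio hiomin hαjo hjomin ⊢
  refine ⟨jacobianCofactor a b f₂, jacobian_X_pow_mul_X_pow ha hb f₂,
    sub_mem_span_of_coeff_axes_eq _ _ io jo (fun m hm => ?_) (fun n hn => ?_), ?_, ?_, ?_⟩
  · rw [map_add, coeff_C_mul, coeff_C_mul, coeff_X_pow, coeff_X_pow, coeff_jacobianCofactor]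
    rcases hm.lt_or_eq with hm | rfl
    · simp [single_eq_single_iff, hiomin m hm, hm.ne, hio.ne', hjo.ne']
    · simp [single_eq_single_iff, hjo.ne']
  · rw [map_add, coeff_C_mul, coeff_C_mul, coeff_X_pow, coeff_X_pow, coeff_jacobianCofactor]
    rcases hn.lt_or_eq with hn | rfl
    · simp [single_eq_single_iff, hjomin n hn, hn.ne, hio.ne', hjo.ne']
    · simp [single_eq_single_iff, hio.ne']
  · rw [Ideal.mem_span_singleton, X_dvd_iff]
    push Not
    exact ⟨single 1 jo, by simp, by simp [coeff_jacobianCofactor, ha.ne', hjo.ne', hαjo]⟩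
  · rw [Ideal.mem_span_singleton, X_dvd_iff]
    push Not
    exact ⟨single 0 io, by simp, by simp [coeff_jacobianCofactor, hb.ne', hio.ne', hαio]⟩
  · rw [isUnit_iff_constantCoeff]
    simp [jacobianCofactor]
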